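/- Let Γ be a discrete subgroup of SL(2,ℝ) and λ ∈ ℤ. If Φ(z,X) is a Jacobi-like form belonging to J_λ(Γ), then 𝔏_λ(Φ)(z,X) is a Jacobi-like form belonging to J_{λ+2}(Γ); that is, 𝔏_λ(J_λ(Γ)) ⊆ J_{λ+2}(Γ). -/

import Mathlib

noncomputable section

open Complex Polynomial

/-- The upper half plane `ℍ`, as a subset of `ℂ`. -/
def UHP : Set ℂ := {z : ℂ | 0 < z.im}

/-- `SL(2, ℝ)`. -/
abbrev SL2R := Matrix.SpecialLinearGroup (Fin 2) ℝ

/-- `GL⁺(2, ℝ)`, the group of real 2×2 matrices of positive determinant. -/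
abbrev GL2P := Matrix.GLPos (Fin 2) ℝ

/-- Topology on `SL(2,ℝ)` induced from the space of matrices (used to speak of
discrete subgroups of `SL(2,ℝ)`). -/
instance : TopologicalSpace SL2R :=
  TopologicalSpace.induced (fun g : SL2R => (g : Matrix (Fin 2) (Fin 2) ℝ)) inferInstance

/-- A function belongs to `𝓕` if it is holomorphic on the upper half plane. -/
def Hol (f : ℂ → ℂ) : Prop := DifferentiableOn ℂ f UHP

/-- `𝔍(γ, z) = cz + d` for `γ ∈ SL(2, ℝ)`. -/
def jJ (γ : SL2R) (z : ℂ) : ℂ := (γ 1 0 : ℝ) * z + (γ 1 1 : ℝ)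

/-- `𝔎(γ, z) = c/(cz + d)` for `γ ∈ SL(2, ℝ)`. -/
def kK (γ : SL2R) (z : ℂ) : ℂ := (γ 1 0 : ℝ) / jJ γ z

/-- `γ z = (az+b)/(cz+d)` for `γ ∈ SL(2, ℝ)`. -/
def mact (γ : SL2R) (z : ℂ) : ℂ := ((γ 0 0 : ℝ) * z + (γ 0 1 : ℝ)) / jJ γ z

/-- The underlying real matrix of an element of `GL⁺(2, ℝ)`. -/
def gmat (α : GL2P) : Matrix (Fin 2) (Fin 2) ℝ :=
  ((α : Matrix.GeneralLinearGroup (Fin 2) ℝ) : Matrix (Fin 2) (Fin 2) ℝ)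

/-- The determinant of an element of `GL⁺(2, ℝ)`. -/
def gdet (α : GL2P) : ℝ := (gmat α).det

/-- `𝔍(α, z) = cz + d` for `α ∈ GL⁺(2, ℝ)`. -/
def gJ (α : GL2P) (z : ℂ) : ℂ := (gmat α 1 0 : ℝ) * z + (gmat α 1 1 : ℝ)

/-- `𝔎(α, z) = c/(cz + d)` for `α ∈ GL⁺(2, ℝ)`. -/
def gK (α : GL2P) (z : ℂ) : ℂ := (gmat α 1 0 : ℝ) / gJ α z

/-- `α z = (az+b)/(cz+d)` for `α ∈ GL⁺(2, ℝ)`. -/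
def gact (α : GL2P) (z : ℂ) : ℂ := ((gmat α 0 0 : ℝ) * z + (gmat α 0 1 : ℝ)) / gJ α z

/-- `(det α)^(μ/2)` for `α ∈ GL⁺(2, ℝ)` and `μ ∈ ℤ`. -/
def detpow (α : GL2P) (μ : ℤ) : ℂ := ((gdet α ^ ((μ : ℝ) / 2) : ℝ) : ℂ)

/-- The weight-`ξ` action `F ∥_ξ γ` of `SL(2,ℝ)` on polynomials over `𝓕`:
`(F ∥_ξ γ)(z, X) = 𝔍(γ,z)^(-ξ) F(γz, 𝔍(γ,z)^2 (X - 𝔎(γ,z)))`. -/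
def polyAct (ξ : ℤ) (F : ℂ → Polynomial ℂ) (γ : SL2R) : ℂ → Polynomial ℂ := fun z =>
  Polynomial.C (jJ γ z ^ (-ξ)) *
    (F (mact γ z)).comp (Polynomial.C (jJ γ z ^ 2) * (Polynomial.X - Polynomial.C (kK γ z)))

/-- The weight-`ξ` action `F ∥_ξ α` of `GL⁺(2,ℝ)` on polynomials over `𝓕`:
`(F ∥_ξ α)(z, X) = (det α)^(ξ/2) 𝔍(α,z)^(-ξ) F(αz, (det α)⁻¹ 𝔍(α,z)^2 (X - 𝔎(α,z)))`. -/
def polyActG (ξ : ℤ) (F : ℂ → Polynomial ℂ) (α : GL2P) : ℂ → Polynomial ℂ := fun z =>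
  Polynomial.C (detpow α ξ * gJ α z ^ (-ξ)) *
    (F (gact α z)).comp
      (Polynomial.C ((gdet α : ℂ)⁻¹ * gJ α z ^ 2) * (Polynomial.X - Polynomial.C (gK α z)))

/-- The weight-`l` action `Φ |^J_l γ` of `SL(2,ℝ)` on formal power series over `𝓕`:
`(Φ |^J_l γ)(z, X) = 𝔍(γ,z)^(-l) e^(-𝔎(γ,z) X) Φ(γz, 𝔍(γ,z)^(-2) X)`. -/
def psAct (l : ℤ) (Φ : ℂ → PowerSeries ℂ) (γ : SL2R) : ℂ → PowerSeries ℂ := fun z =>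
  PowerSeries.C (jJ γ z ^ (-l)) *
    (PowerSeries.mk fun n => (-(kK γ z)) ^ n / (n.factorial : ℂ)) *
    PowerSeries.rescale (jJ γ z ^ (-2 : ℤ)) (Φ (mact γ z))

/-- The weight-`l` action `Φ |^J_l α` of `GL⁺(2,ℝ)` on formal power series over `𝓕`:
`(Φ |^J_l α)(z, X) = (det α)^(l/2) 𝔍(α,z)^(-l) e^(-𝔎(α,z) X) Φ(αz, (det α) 𝔍(α,z)^(-2) X)`. -/
def psActG (l : ℤ) (Φ : ℂ → PowerSeries ℂ) (α : GL2P) : ℂ → PowerSeries ℂ := fun z =>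
  PowerSeries.C (detpow α l * gJ α z ^ (-l)) *
    (PowerSeries.mk fun n => (-(gK α z)) ^ n / (n.factorial : ℂ)) *
    PowerSeries.rescale ((gdet α : ℂ) * gJ α z ^ (-2 : ℤ)) (Φ (gact α z))

/-- The map `Π^δ_m`: for `Φ(z,X) = Σ_k φ_k(z) X^(k+δ)`,
`(Π^δ_m Φ)(z, X) = Σ_{r=0}^m (1/r!) φ_(m-r)(z) X^r`. -/
def PiDM (δ m : ℕ) (Φ : ℂ → PowerSeries ℂ) : ℂ → Polynomial ℂ := fun z =>
  ∑ r ∈ Finset.range (m + 1),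
    Polynomial.C ((PowerSeries.coeff (m - r + δ) (Φ z)) / (r.factorial : ℂ)) *
      Polynomial.X ^ r

/-- Membership in `𝓕_m[X]`: degree at most `m` and holomorphic coefficients. -/
def InFmX (m : ℕ) (F : ℂ → Polynomial ℂ) : Prop :=
  (∀ z : ℂ, (F z).degree ≤ (m : WithBot ℕ)) ∧ ∀ r : ℕ, Hol fun z => (F z).coeff r

/-- Membership in `𝓕[[X]]_δ = X^δ 𝓕[[X]]` with holomorphic coefficients. -/
def InFXd (δ : ℕ) (Φ : ℂ → PowerSeries ℂ) : Prop :=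
  (∀ z : ℂ, ∀ k < δ, PowerSeries.coeff k (Φ z) = 0) ∧
    ∀ k : ℕ, Hol fun z => PowerSeries.coeff k (Φ z)

/-- `QP^m_ξ(Γ)`: quasimodular polynomials of weight `ξ` and degree at most `m` for `Γ`. -/
def IsQP (Γ : Subgroup SL2R) (ξ : ℤ) (m : ℕ) (F : ℂ → Polynomial ℂ) : Prop :=
  InFmX m F ∧ ∀ γ ∈ Γ, ∀ z ∈ UHP, polyAct ξ F γ z = F z

/-- `J_l(Γ)_δ`: Jacobi-like forms of weight `l` for `Γ` lying in `𝓕[[X]]_δ`. -/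
def IsJF (Γ : Subgroup SL2R) (l : ℤ) (δ : ℕ) (Φ : ℂ → PowerSeries ℂ) : Prop :=
  InFXd δ Φ ∧ ∀ γ ∈ Γ, ∀ z ∈ UHP, psAct l Φ γ z = Φ z

/-- `M_μ(Γ)`: modular forms of weight `μ` for `Γ` (cusp conditions suppressed). -/
def IsModular (Γ : Subgroup SL2R) (μ : ℤ) (f : ℂ → ℂ) : Prop :=
  Hol f ∧ ∀ γ ∈ Γ, ∀ z ∈ UHP, jJ γ z ^ (-μ) * f (mact γ z) = f z

/-- `QM^m_ξ(Γ)`: quasimodular forms of weight `ξ` and depth at most `m` for `Γ`. -/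
def IsQM (Γ : Subgroup SL2R) (ξ : ℤ) (m : ℕ) (f : ℂ → ℂ) : Prop :=
  Hol f ∧ ∃ g : ℕ → ℂ → ℂ, (∀ r, Hol (g r)) ∧
    ∀ γ ∈ Γ, ∀ z ∈ UHP,
      jJ γ z ^ (-ξ) * f (mact γ z) = ∑ r ∈ Finset.range (m + 1), g r z * kK γ z ^ r

/-- The factorial `t!` of an integer `t` (equal to `(t.toNat)!`; intended for `t ≥ 0`). -/
def zfact (t : ℤ) : ℂ := (t.toNat.factorial : ℂ)

/-- The radial heat operator `𝔏_μ = ∂/∂z - μ ∂/∂X - X ∂²/∂X²` on `𝓕[[X]]`. -/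
def heat (μ : ℝ) (Φ : ℂ → PowerSeries ℂ) : ℂ → PowerSeries ℂ := fun z =>
  PowerSeries.mk fun n =>
    deriv (fun w => PowerSeries.coeff n (Φ w)) z -
      ((n : ℂ) + 1) * ((μ : ℂ) + (n : ℂ)) * PowerSeries.coeff (n + 1) (Φ z)


/-!
Write `Φ |^J_λ γ = 𝔍^(-λ) · e^(-𝔎 X) · Φ(γz, 𝔍^(-2) X)` as a product of three families of
power series and differentiate it coefficientwise in `z`, using `∂𝔍/∂z = c`,
`∂(γz)/∂z = 𝔍^(-2)` and `∂(-𝔎)/∂z = 𝔎²`. Together with Leibniz' rule for `∂/∂X`, all terms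
involving `𝔎` cancel, which gives the equivariance `𝔏_λ(Φ |^J_λ γ) = (𝔏_λ Φ) |^J_(λ+2) γ`.
Since `𝔏_λ Φ` at `z` only depends on `Φ` near `z` and `ℍ` is open, `Γ`-invariance of `Φ` passes
to `𝔏_λ Φ`.
-/

open scoped PowerSeries
open Filter Topology

namespace PowerSeries

variable {R : Type*} [CommSemiring R]

theorem rescale_C (a c : R) : rescale a (C c) = C c := by
  ext n
  rcases n with _ | n <;> simp [coeff_rescale, coeff_C]

theorem derivative_rescale (a : R) (f : R⟦X⟧) :
    d⁄dX R (rescale a f) = C a * rescale a (d⁄dX R f) := by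
  ext n
  simp only [coeff_derivative, coeff_rescale, coeff_C_mul]
  ring

theorem mk_pow_div_factorial_eq_rescale_exp {K : Type*} [Field K] [CharZero K] (c : K) :
    mk (fun n => c ^ n / (n.factorial : K)) = rescale c (exp K) := by
  ext n
  simp [coeff_rescale, coeff_exp, div_eq_mul_inv]

end PowerSeries

section CoeffDeriv

open PowerSeries (coeff)

variable {𝕜 : Type*} [NontriviallyNormedField 𝕜]

def HasCoeffDerivAt (Φ : 𝕜 → 𝕜⟦X⟧) (Φ' : 𝕜⟦X⟧) (z : 𝕜) : Prop :=
  ∀ n, HasDerivAt (fun w => coeff n (Φ w)) (coeff n Φ') z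

def coeffDeriv (Φ : 𝕜 → 𝕜⟦X⟧) (z : 𝕜) : 𝕜⟦X⟧ :=
  PowerSeries.mk fun n => deriv (fun w => coeff n (Φ w)) z

namespace HasCoeffDerivAt

variable {Φ Ψ : 𝕜 → 𝕜⟦X⟧} {Φ' Ψ' : 𝕜⟦X⟧} {z : 𝕜}

theorem coeffDeriv_eq (h : HasCoeffDerivAt Φ Φ' z) : coeffDeriv Φ z = Φ' := by
  ext n
  simp [coeffDeriv, (h n).deriv]

theorem of_differentiableAt (h : ∀ n, DifferentiableAt 𝕜 (fun w => coeff n (Φ w)) z) :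
    HasCoeffDerivAt Φ (coeffDeriv Φ z) z := fun n => by
  simpa [coeffDeriv] using (h n).hasDerivAt

theorem const (Φ₀ : 𝕜⟦X⟧) : HasCoeffDerivAt (fun _ => Φ₀) 0 z := fun n => by
  simpa using hasDerivAt_const z (coeff n Φ₀)

theorem C {f : 𝕜 → 𝕜} {f' : 𝕜} (hf : HasDerivAt f f' z) :
    HasCoeffDerivAt (fun w => PowerSeries.C (f w)) (PowerSeries.C f') z := fun n => by
  rcases n with _ | n
  · simpa using hf
  · simpa [PowerSeries.coeff_C] using hasDerivAt_const z (0 : 𝕜)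

theorem mul (hΦ : HasCoeffDerivAt Φ Φ' z) (hΨ : HasCoeffDerivAt Ψ Ψ' z) :
    HasCoeffDerivAt (fun w => Φ w * Ψ w) (Φ' * Ψ z + Φ z * Ψ') z := fun n => by
  simp only [PowerSeries.coeff_mul, map_add, ← Finset.sum_add_distrib]
  exact HasDerivAt.fun_sum fun p _ => (hΦ p.1).mul (hΨ p.2)

theorem comp {g : 𝕜 → 𝕜} {g' : 𝕜} (hΦ : HasCoeffDerivAt Φ Φ' (g z)) (hg : HasDerivAt g g' z) :
    HasCoeffDerivAt (fun w => Φ (g w)) (PowerSeries.C g' * Φ') z := fun n => by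
  rw [PowerSeries.coeff_C_mul, mul_comm]
  exact (hΦ n).comp z hg

theorem rescale {u : 𝕜 → 𝕜} {u' : 𝕜} (hu : HasDerivAt u u' z) (hΦ : HasCoeffDerivAt Φ Φ' z) :
    HasCoeffDerivAt (fun w => PowerSeries.rescale (u w) (Φ w))
      (PowerSeries.rescale (u z) Φ' +
        PowerSeries.C u' * PowerSeries.X * PowerSeries.rescale (u z) (d⁄dX 𝕜 (Φ z))) z :=
  fun n => by
  rcases n with _ | n
  · simp only [PowerSeries.coeff_rescale, map_add, pow_zero, one_mul, mul_assoc,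
      PowerSeries.coeff_C_mul, PowerSeries.coeff_zero_X_mul, mul_zero, add_zero]
    exact hΦ 0
  · simp only [PowerSeries.coeff_rescale, map_add, mul_assoc, PowerSeries.coeff_C_mul,
      PowerSeries.coeff_succ_X_mul, PowerSeries.coeff_derivative]
    refine ((hu.fun_pow (n + 1)).mul (hΦ (n + 1))).congr_deriv ?_
    push_cast
    ring

end HasCoeffDerivAt

end CoeffDeriv

theorem isOpen_UHP : IsOpen UHP := isOpen_lt continuous_const Complex.continuous_im

section Moebius

variable (γ : SL2R) {z : ℂ}

theorem SL2R.ad_sub_bc : (γ 0 0 : ℝ) * γ 1 1 - γ 0 1 * γ 1 0 = 1 := by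
  rw [← Matrix.det_fin_two]
  exact γ.prop

theorem jJ_ne_zero (hz : z ∈ UHP) : jJ γ z ≠ 0 := by
  have hdet := SL2R.ad_sub_bc γ
  intro h
  have him : (γ 1 0 : ℝ) * z.im = 0 := by simpa [jJ] using congrArg Complex.im h
  have hc : (γ 1 0 : ℝ) = 0 := (mul_eq_zero.mp him).resolve_right (ne_of_gt hz)
  have hd : (γ 1 1 : ℝ) = 0 := by simpa [jJ, hc] using congrArg Complex.re h
  simp [hc, hd] at hdet

theorem mact_mem_UHP (hz : z ∈ UHP) : mact γ z ∈ UHP := by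
  have hdet := SL2R.ad_sub_bc γ
  have hz' : 0 < z.im := hz
  show 0 < (mact γ z).im
  rw [mact, Complex.div_im, div_sub_div_same]
  refine div_pos ?_ (Complex.normSq_pos.mpr (jJ_ne_zero γ hz))
  simp only [jJ, Complex.add_im, Complex.add_re, Complex.mul_im, Complex.mul_re,
    Complex.ofReal_im, Complex.ofReal_re]
  nlinarith

theorem hasDerivAt_jJ : HasDerivAt (jJ γ) (γ 1 0 : ℝ) z := by
  have h : HasDerivAt (fun w : ℂ => (γ 1 0 : ℝ) * w + (γ 1 1 : ℝ)) ((γ 1 0 : ℝ) : ℂ) z := by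
    simpa using ((hasDerivAt_id z).const_mul ((γ 1 0 : ℝ) : ℂ)).add_const ((γ 1 1 : ℝ) : ℂ)
  exact h

theorem hasDerivAt_mact (hz : z ∈ UHP) : HasDerivAt (mact γ) (jJ γ z ^ (-2 : ℤ)) z := by
  have hdet : (γ 0 0 : ℂ) * γ 1 1 - γ 0 1 * γ 1 0 = 1 := by
    exact_mod_cast SL2R.ad_sub_bc γ
  have hnum : HasDerivAt (fun w : ℂ => (γ 0 0 : ℝ) * w + (γ 0 1 : ℝ)) ((γ 0 0 : ℝ) : ℂ) z := by
    simpa using ((hasDerivAt_id z).const_mul ((γ 0 0 : ℝ) : ℂ)).add_const ((γ 0 1 : ℝ) : ℂ)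
  have hJ := jJ_ne_zero γ hz
  refine (hnum.div (hasDerivAt_jJ γ) hJ).congr_deriv ?_
  rw [zpow_neg, zpow_two]
  field_simp
  rw [jJ]
  linear_combination hdet

theorem hasDerivAt_neg_kK (hz : z ∈ UHP) :
    HasDerivAt (fun w => -kK γ w) (kK γ z ^ 2) z := by
  refine ((hasDerivAt_const z ((γ 1 0 : ℝ) : ℂ)).div (hasDerivAt_jJ γ)
    (jJ_ne_zero γ hz)).neg.congr_deriv ?_
  rw [kK]
  field_simp
  ring

theorem hasDerivAt_jJ_zpow (hz : z ∈ UHP) (m : ℤ) :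
    HasDerivAt (fun w => jJ γ w ^ m) (m * kK γ z * jJ γ z ^ m) z := by
  have hJ := jJ_ne_zero γ hz
  refine ((hasDerivAt_zpow m (jJ γ z) (Or.inl hJ)).comp z (hasDerivAt_jJ γ)).congr_deriv ?_
  rw [kK, zpow_sub_one₀ hJ]
  field_simp

end Moebius

theorem psAct_eq (l : ℤ) (Φ : ℂ → ℂ⟦X⟧) (γ : SL2R) (z : ℂ) :
    psAct l Φ γ z = PowerSeries.C (jJ γ z ^ (-l)) *
      PowerSeries.rescale (-kK γ z) (PowerSeries.exp ℂ) *
      PowerSeries.rescale (jJ γ z ^ (-2 : ℤ)) (Φ (mact γ z)) := by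
  rw [psAct, PowerSeries.mk_pow_div_factorial_eq_rescale_exp]

theorem heat_eq (μ : ℝ) (Φ : ℂ → ℂ⟦X⟧) (z : ℂ) :
    heat μ Φ z = coeffDeriv Φ z - PowerSeries.C (μ : ℂ) * d⁄dX ℂ (Φ z) -
      PowerSeries.X * d⁄dX ℂ (d⁄dX ℂ (Φ z)) := by
  ext (_ | n) <;>
    simp only [heat, coeffDeriv, map_sub, PowerSeries.coeff_mk, PowerSeries.coeff_C_mul,
      PowerSeries.coeff_zero_X_mul, PowerSeries.coeff_succ_X_mul,
      PowerSeries.coeff_derivative] <;>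
    push_cast <;> ring

theorem heat_congr {μ : ℝ} {Φ Ψ : ℂ → ℂ⟦X⟧} {z : ℂ} (h : Φ =ᶠ[𝓝 z] Ψ) :
    heat μ Φ z = heat μ Ψ z := by
  ext n
  have hn : (fun w => PowerSeries.coeff n (Φ w)) =ᶠ[𝓝 z] fun w => PowerSeries.coeff n (Ψ w) :=
    h.mono fun w hw => congrArg _ hw
  simp only [heat, PowerSeries.coeff_mk, h.eq_of_nhds, hn.deriv_eq]

theorem hol_coeff_heat (μ : ℝ) {Φ : ℂ → ℂ⟦X⟧}
    (hΦ : ∀ k, Hol fun z => PowerSeries.coeff k (Φ z)) (n : ℕ) : Hol fun z => PowerSeries.coeff n (heat μ Φ z) := by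
  simp only [heat, PowerSeries.coeff_mk]
  exact (((hΦ n).analyticOnNhd isOpen_UHP).deriv).differentiableOn.sub
    ((hΦ (n + 1)).const_mul _)

theorem heat_psAct (l : ℤ) {Φ : ℂ → ℂ⟦X⟧} {Φ' : ℂ⟦X⟧} {γ : SL2R} {z : ℂ} (hz : z ∈ UHP)
    (hΦ : HasCoeffDerivAt Φ Φ' (mact γ z)) :
    heat l (psAct l Φ γ) z = psAct (l + 2) (heat l Φ) γ z := by
  have hJ := jJ_ne_zero γ hz
  have hP : HasDerivAt (fun w => jJ γ w ^ (-l)) (-l * kK γ z * jJ γ z ^ (-l)) z := by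
    simpa using hasDerivAt_jJ_zpow γ hz (-l)
  have hu : HasDerivAt (fun w => jJ γ w ^ (-2 : ℤ))
      (-2 * kK γ z * jJ γ z ^ (-2 : ℤ)) z := by
    simpa using hasDerivAt_jJ_zpow γ hz (-2)
  have hD := ((HasCoeffDerivAt.C hP).mul
      ((HasCoeffDerivAt.const (PowerSeries.exp ℂ)).rescale (hasDerivAt_neg_kK γ hz))).mul
    ((hΦ.comp (hasDerivAt_mact γ hz)).rescale hu)
  have hJl : jJ γ z ^ (-(l + 2)) = jJ γ z ^ (-l) * jJ γ z ^ (-2 : ℤ) := by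
    rw [← zpow_add₀ hJ, neg_add]
  rw [heat_eq, funext (psAct_eq l Φ γ), hD.coeffDeriv_eq, psAct_eq, heat_eq,
    hΦ.coeffDeriv_eq, hJl]
  simp only [Derivation.leibniz, PowerSeries.derivative_rescale, PowerSeries.derivative_exp,
    PowerSeries.derivative_C, smul_eq_mul, map_sub, map_mul, map_add, map_neg, map_pow,
    PowerSeries.rescale_X, PowerSeries.rescale_C, map_zero, map_ofNat,
    Complex.ofReal_intCast]
  ring

theorem stmt18_general (Γ : Subgroup SL2R) (l : ℤ)
    (Φ : ℂ → PowerSeries ℂ) (hΦ : ∀ k : ℕ, Hol fun z => PowerSeries.coeff k (Φ z))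
    (hinv : ∀ γ ∈ Γ, ∀ z ∈ UHP, psAct l Φ γ z = Φ z) :
    (∀ k : ℕ, Hol fun z => PowerSeries.coeff k (heat (l : ℝ) Φ z)) ∧
      ∀ γ ∈ Γ, ∀ z ∈ UHP, psAct (l + 2) (heat (l : ℝ) Φ) γ z = heat (l : ℝ) Φ z := by
  refine ⟨hol_coeff_heat l hΦ, fun γ hγ z hz => ?_⟩
  have hΦ' : HasCoeffDerivAt Φ (coeffDeriv Φ (mact γ z)) (mact γ z) :=
    .of_differentiableAt fun n =>
      (hΦ n).differentiableAt (isOpen_UHP.mem_nhds (mact_mem_UHP γ hz))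
  have hloc : psAct l Φ γ =ᶠ[𝓝 z] Φ :=
    eventually_of_mem (isOpen_UHP.mem_nhds hz) (hinv γ hγ)
  rw [← heat_psAct l hz hΦ', heat_congr hloc]

theorem stmt18 (Γ : Subgroup SL2R) (hΓ : DiscreteTopology Γ) (l : ℤ)
    (Φ : ℂ → PowerSeries ℂ) (hΦ : ∀ k : ℕ, Hol fun z => PowerSeries.coeff k (Φ z))
    (hinv : ∀ γ ∈ Γ, ∀ z ∈ UHP, psAct l Φ γ z = Φ z) :
    (∀ k : ℕ, Hol fun z => PowerSeries.coeff k (heat (l : ℝ) Φ z)) ∧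
      ∀ γ ∈ Γ, ∀ z ∈ UHP, psAct (l + 2) (heat (l : ℝ) Φ) γ z = heat (l : ℝ) Φ z :=
  stmt18_general Γ l Φ hΦ hinv
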